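/- arXiv:2207.01574 — 7 statements merged into one kernel-verified Lean document; each statement's English description precedes it below -/
import Mathlib

section
/- Let V be a finite index set with positive real weights (N_v)_{v∈V}, let n ≥ 1, and let (x_{i,v})_{1≤i≤n, v∈V} be real numbers such that for every i, ∑_{v∈V} N_v · x_{i,v} = 0. Then ∑_{v∈V} N_v · max_{1≤i≤n} |x_{i,v}| ≤ (n+1) · ∑_{v∈V} N_v · max(0, max_{1≤i≤n} x_{i,v}). -/
/-!
Split `|x| = x⁺ + x⁻`. Pointwise, `max_i |x i v| ≤ (max_i x i v)⁺ + ∑_i (x i v)⁻`. The product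
formula for `x i` says exactly that its weighted negative parts sum to its weighted positive
parts, and `(x i v)⁺ ≤ (max_j x j v)⁺`; so each of the `n` negative-part sums is bounded by
the right-hand sum.
-/

open Finset

theorem sum_mul_negPart_eq_sum_mul_posPart {ι R : Type*} [Ring R] [Lattice R] [AddLeftMono R]
    (s : Finset ι) (N y : ι → R) (h : ∑ v ∈ s, N v * y v = 0) :
    ∑ v ∈ s, N v * (y v)⁻ = ∑ v ∈ s, N v * (y v)⁺ := by
  refine (sub_eq_zero.mp ?_).symm
  rw [← sum_sub_distrib, ← h]
  simp_rw [← mul_sub, posPart_sub_negPart]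

theorem sup'_abs_le_posPart_sup'_add_sum_negPart {ι α : Type*} [AddCommGroup α] [LinearOrder α]
    [IsOrderedAddMonoid α] (s : Finset ι) (hs : s.Nonempty) (x : ι → α) :
    s.sup' hs (fun i => |x i|) ≤ (s.sup' hs x)⁺ + ∑ i ∈ s, (x i)⁻ := by
  refine sup'_le hs _ fun i hi => ?_
  rw [← posPart_add_negPart]
  exact add_le_add (posPart_mono (le_sup' x hi))
    (single_le_sum (fun j _ => negPart_nonneg (x j)) hi)

theorem sum_mul_sup'_abs_le_card_add_one_mul {V ι : Type*} [Fintype V] [Fintype ι]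
    (hι : (univ : Finset ι).Nonempty) (N : V → ℝ) (hN : ∀ v, 0 ≤ N v) (x : ι → V → ℝ)
    (hx : ∀ i, ∑ v, N v * x i v = 0) :
    ∑ v, N v * univ.sup' hι (fun i => |x i v|)
      ≤ (Fintype.card ι + 1) * ∑ v, N v * (univ.sup' hι fun i => x i v)⁺ := by
  set S : V → ℝ := fun v => univ.sup' hι fun i => x i v
  calc ∑ v, N v * univ.sup' hι (fun i => |x i v|)
      ≤ ∑ v, N v * ((S v)⁺ + ∑ i, (x i v)⁻) := by
        gcongr with v
        · exact hN v
        · exact sup'_abs_le_posPart_sup'_add_sum_negPart _ hι _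
    _ = ∑ v, N v * (S v)⁺ + ∑ i, ∑ v, N v * (x i v)⁻ := by
        simp_rw [mul_add, sum_add_distrib, mul_sum]
        rw [sum_comm]
    _ = ∑ v, N v * (S v)⁺ + ∑ i, ∑ v, N v * (x i v)⁺ := by
        simp_rw [sum_mul_negPart_eq_sum_mul_posPart _ _ _ (hx _)]
    _ ≤ ∑ v, N v * (S v)⁺ + ∑ _i : ι, ∑ v, N v * (S v)⁺ := by
        gcongr with i _ v
        · exact hN v
        · exact posPart_mono (le_sup' (fun i => x i v) (mem_univ i))
    _ = (Fintype.card ι + 1) * ∑ v, N v * (S v)⁺ := by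
        rw [sum_const, card_univ, nsmul_eq_mul]
        ring

theorem stmt_0 {V : Type*} [Fintype V] (N : V → ℝ) (hN : ∀ v, 0 < N v)
    (n : ℕ) (hn : 1 ≤ n) (x : Fin n → V → ℝ)
    (hx : ∀ i : Fin n, ∑ v, N v * x i v = 0) :
    ∑ v, N v * ((Finset.univ : Finset (Fin n)).sup'
        (Finset.univ_nonempty_iff.mpr (Fin.pos_iff_nonempty.mp hn)) fun i => |x i v|)
      ≤ (n + 1 : ℝ) * ∑ v, N v * max 0 ((Finset.univ : Finset (Fin n)).sup'
        (Finset.univ_nonempty_iff.mpr (Fin.pos_iff_nonempty.mp hn)) fun i => x i v) := by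
  simpa only [Fintype.card_fin, posPart_def, max_comm _ (0 : ℝ)] using
    sum_mul_sup'_abs_le_card_add_one_mul _ N (fun v => (hN v).le) x hx
end

section
/- Let x₁, x₂, x₃ and y₁, y₂, y₃ be real numbers. Let S denote the second largest element (counted with multiplicity) of the nine sums x_i + y_j, i.e. S = min over pairs (i₀,j₀) of max over (i,j) ≠ (i₀,j₀) of (x_i + y_j). Then S ≥ ½ · ( max_i x_i + smax_j y_j + smax_i x_i + max_j y_j ), where smax of three reals denotes their second largest element (the median). -/
open Finset

/-- The sub-maximum (second largest element, i.e. the median) of three reals. -/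
noncomputable def smax3 (t : Fin 3 → ℝ) : ℝ :=
  (Finset.univ : Finset (Fin 3)).inf' ⟨0, Finset.mem_univ 0⟩ fun j =>
    (Finset.univ.erase j).sup'
      (⟨j + 1, Finset.mem_erase.mpr ⟨by simp [Fin.ext_iff, Fin.add_def]; omega,
        Finset.mem_univ _⟩⟩) t

/-- The second largest (with multiplicity) of the nine sums `x i + y j`. -/
noncomputable def smax9 (x y : Fin 3 → ℝ) : ℝ :=
  (Finset.univ : Finset (Fin 3 × Fin 3)).inf' ⟨(0, 0), Finset.mem_univ _⟩ fun p =>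
    (Finset.univ.erase p).sup'
      (⟨(p.1 + 1, p.2), Finset.mem_erase.mpr
        ⟨by simp [Prod.ext_iff, Fin.ext_iff, Fin.add_def]; omega, Finset.mem_univ _⟩⟩)
      fun q => x q.1 + y q.2

/-! Let `a`, `b` maximise `x`, `y`, and pick `a' ≠ a`, `b' ≠ b` with `smax3 x ≤ x a'` and
`smax3 y ≤ y b'`. Deleting any single one of the nine sums leaves one of `x a + y b`, `x a + y b'`,
both `≥ x a + y b'`, and one of `x a + y b`, `x a' + y b`, both `≥ x a' + y b`; so `smax9 x y`
dominates the average of these two bounds. -/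

theorem Finset.min_le_sup'_erase {ι α : Type*} [DecidableEq ι] [LinearOrder α] {s : Finset ι}
    {q r : ι} (hq : q ∈ s) (hr : r ∈ s) (hqr : q ≠ r) (p : ι) (hs : (s.erase p).Nonempty)
    (f : ι → α) : min (f q) (f r) ≤ (s.erase p).sup' hs f := by
  by_cases hpq : p = q
  · subst hpq
    exact (min_le_right _ _).trans (le_sup' f (mem_erase.mpr ⟨hqr.symm, hr⟩))
  · exact (min_le_left _ _).trans (le_sup' f (mem_erase.mpr ⟨Ne.symm hpq, hq⟩))

theorem exists_ne_smax3_le (t : Fin 3 → ℝ) (i : Fin 3) : ∃ j ≠ i, smax3 t ≤ t j := by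
  obtain ⟨j, hj, hjt⟩ := exists_mem_eq_sup' ((erase_nonempty (mem_univ i)).mpr univ_nontrivial) t
  exact ⟨j, (mem_erase.mp hj).1, hjt ▸ inf'_le _ (mem_univ i)⟩

theorem min_le_smax9 (x y : Fin 3 → ℝ) {q r : Fin 3 × Fin 3} (hqr : q ≠ r) :
    min (x q.1 + y q.2) (x r.1 + y r.2) ≤ smax9 x y :=
  le_inf' _ _ fun p _ =>
    min_le_sup'_erase (mem_univ q) (mem_univ r) hqr p _ fun q => x q.1 + y q.2

theorem stmt_1 (x y : Fin 3 → ℝ) :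
    (1 / 2) * ((Finset.univ.sup' ⟨0, Finset.mem_univ 0⟩ x) + smax3 y
        + smax3 x + (Finset.univ.sup' ⟨0, Finset.mem_univ 0⟩ y))
      ≤ smax9 x y := by
  obtain ⟨a, -, ha⟩ := exists_mem_eq_sup' univ_nonempty x
  obtain ⟨b, -, hb⟩ := exists_mem_eq_sup' univ_nonempty y
  obtain ⟨a', ha'a, hxa'⟩ := exists_ne_smax3_le x a
  obtain ⟨b', hb'b, hyb'⟩ := exists_ne_smax3_le y b
  have hxa : x a' ≤ x a := ha ▸ le_sup' x (mem_univ a')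
  have hyb : y b' ≤ y b := hb ▸ le_sup' y (mem_univ b')
  have hab' : x a + y b' ≤ smax9 x y := by
    simpa [hyb] using min_le_smax9 x y (q := (a, b)) (r := (a, b')) (by simp [hb'b.symm])
  have ha'b : x a' + y b ≤ smax9 x y := by
    simpa [hxa] using min_le_smax9 x y (q := (a, b)) (r := (a', b)) (by simp [ha'a.symm])
  rw [ha, hb]
  linarith
end

section
/- Let n ≥ 1, let x₁,…,x_n be real numbers, and let c₁,…,c_n be real numbers with ∑_{i=1}^n c_i = 0. Then ∑_{i=1}^n ∑_{j=1}^n c_i c_j |x_i - x_j| ≤ 0. Equivalently, -∑_{i,j} c_i c_j max(x_i, x_j) ≥ 0. -/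
/-!
Since `|a - b| = a + b - 2 min(a, b)` and `max(a, b) = a + b - min(a, b)`, and `∑ cᵢ = 0` kills
the terms `a + b`, both claims reduce to `∑ cᵢ cⱼ min(xᵢ, xⱼ) ≥ 0`. This form is invariant under
shifting all `xᵢ` by a constant, and for nonnegative `xᵢ` it holds by induction on the number of
points: lowering every point by the smallest one, `x_k`, costs `(∑ cᵢ)² x_k ≥ 0` and moves `x_k`
to `0`, where its row and column of `min(xᵢ, xⱼ)` vanish.
-/

open Finset

theorem max_eq_neg_min_add_add {G : Type*} [AddCommGroup G] [LinearOrder G] (a b : G) :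
    max a b = -min a b + a + b := by
  rw [add_assoc, ← min_add_max a b]; abel

theorem abs_sub_eq_neg_two_mul_min_add_add {R : Type*} [CommRing R] [LinearOrder R]
    [IsStrictOrderedRing R] (a b : R) : |a - b| = -2 * min a b + a + b := by
  rw [← max_sub_min_eq_abs', max_eq_neg_min_add_add]; ring

variable {ι R : Type*} (s : Finset ι)

section CommRing

variable [CommRing R] (c : ι → R)

theorem sum_sum_mul_mul_add_const (K : ι → ι → R) (t : R) :
    ∑ i ∈ s, ∑ j ∈ s, c i * c j * (K i j + t) =
      ∑ i ∈ s, ∑ j ∈ s, c i * c j * K i j + (∑ i ∈ s, c i) ^ 2 * t := by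
  rw [sq, sum_mul_sum, sum_mul]
  simp only [mul_add, sum_add_distrib, sum_mul]

theorem sum_sum_mul_mul_add_add_of_sum_eq_zero (hc : ∑ i ∈ s, c i = 0)
    (K : ι → ι → R) (f g : ι → R) :
    ∑ i ∈ s, ∑ j ∈ s, c i * c j * (K i j + f i + g j) = ∑ i ∈ s, ∑ j ∈ s, c i * c j * K i j := by
  have hf : ∑ i ∈ s, ∑ j ∈ s, c i * c j * f i = 0 := by
    simp only [mul_right_comm (c _) (c _), ← mul_sum, hc, mul_zero, sum_const_zero]
  have hg : ∑ i ∈ s, ∑ j ∈ s, c i * c j * g j = 0 := by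
    simp only [mul_assoc, ← mul_sum, ← sum_mul, hc, zero_mul]
  simp only [mul_add, sum_add_distrib, hf, hg, add_zero]

end CommRing

variable [CommRing R] [LinearOrder R] [IsStrictOrderedRing R] (c : ι → R)

theorem sum_sum_mul_mul_min_nonneg_of_nonneg [DecidableEq ι] (x : ι → R)
    (hx : ∀ i ∈ s, 0 ≤ x i) : 0 ≤ ∑ i ∈ s, ∑ j ∈ s, c i * c j * min (x i) (x j) := by
  induction s using Finset.strongInduction generalizing x with
  | _ s ih =>
  rcases s.eq_empty_or_nonempty with rfl | hs
  · simp
  obtain ⟨k, hk, hk_min⟩ := s.exists_min_image x hs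
  set y := fun i => x i - x k
  have hy : ∀ i ∈ s, 0 ≤ y i := fun i hi => sub_nonneg.2 (hk_min i hi)
  have h_shift : ∑ i ∈ s, ∑ j ∈ s, c i * c j * min (x i) (x j) =
      ∑ i ∈ s, ∑ j ∈ s, c i * c j * min (y i) (y j) + (∑ i ∈ s, c i) ^ 2 * x k := by
    simp only [y, min_sub_sub_right, ← sum_sum_mul_mul_add_const, sub_add_cancel]
  have h_erase : ∑ i ∈ s, ∑ j ∈ s, c i * c j * min (y i) (y j) =
      ∑ i ∈ s.erase k, ∑ j ∈ s.erase k, c i * c j * min (y i) (y j) := by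
    have hyk : y k = 0 := sub_self _
    rw [← sum_erase s (a := k)
      (sum_eq_zero fun j hj => by rw [hyk, min_eq_left (hy j hj), mul_zero])]
    refine sum_congr rfl fun i hi => (sum_erase s ?_).symm
    rw [hyk, min_eq_right (hy i (mem_of_mem_erase hi)), mul_zero]
  rw [h_shift, h_erase]
  have h_rest := ih _ (erase_ssubset hk) y fun i hi => hy i (mem_of_mem_erase hi)
  have hxk := hx k hk
  positivity

theorem sum_sum_mul_mul_min_nonneg (hc : ∑ i ∈ s, c i = 0) (x : ι → R) :
    0 ≤ ∑ i ∈ s, ∑ j ∈ s, c i * c j * min (x i) (x j) := by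
  classical
  rcases s.eq_empty_or_nonempty with rfl | hs
  · simp
  obtain ⟨k, hk, hk_min⟩ := s.exists_min_image x hs
  have := sum_sum_mul_mul_min_nonneg_of_nonneg s c (fun i => x i - x k)
    fun i hi => sub_nonneg.2 (hk_min i hi)
  simp only [min_sub_sub_right] at this
  simpa only [sub_eq_add_neg, sum_sum_mul_mul_add_const, hc, sq, mul_zero, zero_mul, add_zero]
    using this

theorem stmt_6_general (n : ℕ) (x c : Fin n → ℝ) (hc : ∑ i, c i = 0) :
    (∑ i, ∑ j, c i * c j * |x i - x j| ≤ 0) ∧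
      0 ≤ -∑ i, ∑ j, c i * c j * max (x i) (x j) := by
  have h_min := sum_sum_mul_mul_min_nonneg univ c hc x
  have h_abs : ∑ i, ∑ j, c i * c j * |x i - x j| =
      -2 * ∑ i, ∑ j, c i * c j * min (x i) (x j) := by
    simp only [abs_sub_eq_neg_two_mul_min_add_add, sum_sum_mul_mul_add_add_of_sum_eq_zero _ _ hc,
      mul_sum]
    exact sum_congr rfl fun i _ => sum_congr rfl fun j _ => by ring
  have h_max : ∑ i, ∑ j, c i * c j * max (x i) (x j) =
      -∑ i, ∑ j, c i * c j * min (x i) (x j) := by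
    simp only [max_eq_neg_min_add_add, sum_sum_mul_mul_add_add_of_sum_eq_zero _ _ hc,
      ← sum_neg_distrib]
    exact sum_congr rfl fun i _ => sum_congr rfl fun j _ => by ring
  constructor <;> linarith

theorem stmt_6 (n : ℕ) (hn : 1 ≤ n) (x c : Fin n → ℝ) (hc : ∑ i, c i = 0) :
    (∑ i, ∑ j, c i * c j * |x i - x j| ≤ 0) ∧
      0 ≤ -∑ i, ∑ j, c i * c j * max (x i) (x j) :=
  stmt_6_general n x c hc
end

section
/- For real numbers r ≤ s ≤ t ≤ u with r < s and t < u, let μ and ν be the uniform probability measures on [r,s] and [t,u] respectively, and define the mutual energy E(μ,ν) := ∫∫ max(x,y) dμ(x)dν(y) − ½∫∫ max(x,y) dμ(x)dμ(y) − ½∫∫ max(x,y) dν(x)dν(y). Then E(μ,ν) = (s−r)/6 + (u−t)/6 + (t−s)/2. -/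
/-!
Both measures have densities, so every energy term reduces to iterated interval integrals of
`max x y`. Since `[r, s]` lies to the left of `[t, u]`, the cross term is just the mean `(t + u) / 2`
of `ν`. For a self term the inner integral over `[r, s]` splits at `x` into `x (x - r)` and
`(s² - x²) / 2`, a quadratic in `x` whose average over `[r, s]` is `r + 2 (s - r) / 3`.
-/

open MeasureTheory

/-- The uniform probability measure on the interval `[r, s]`. -/
noncomputable def unifIcc (r s : ℝ) : Measure ℝ :=
  (ENNReal.ofReal (s - r))⁻¹ • (volume.restrict (Set.Icc r s))

/-- The mutual energy of two measures on `ℝ` with respect to the kernel `max x y`. -/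
noncomputable def mutualE (μ ν : Measure ℝ) : ℝ :=
  (∫ x, ∫ y, max x y ∂ν ∂μ)
    - (1/2) * (∫ x, ∫ y, max x y ∂μ ∂μ)
    - (1/2) * (∫ x, ∫ y, max x y ∂ν ∂ν)

lemma integral_unifIcc {r s : ℝ} (h : r ≤ s) (f : ℝ → ℝ) :
    ∫ x, f x ∂(unifIcc r s) = (s - r)⁻¹ * ∫ x in r..s, f x := by
  rw [unifIcc, integral_smul_measure, intervalIntegral.integral_of_le h,
    ← integral_Icc_eq_integral_Ioc, ENNReal.toReal_inv, ENNReal.toReal_ofReal (sub_nonneg.2 h),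
    smul_eq_mul]

lemma integral_max_of_le {x t u : ℝ} (hxt : x ≤ t) (htu : t ≤ u) :
    ∫ y in t..u, max x y = (u ^ 2 - t ^ 2) / 2 := by
  rw [intervalIntegral.integral_congr (g := fun y => y) fun y hy =>
    max_eq_right (hxt.trans (Set.uIcc_of_le htu ▸ hy).1), integral_id]

lemma integral_max_of_mem_Icc {x r s : ℝ} (hx : x ∈ Set.Icc r s) :
    ∫ y in r..s, max x y = ((x - r) ^ 2 + (s ^ 2 - r ^ 2)) / 2 := by
  have hint : ∀ a b : ℝ, IntervalIntegrable (fun y => max x y) volume a b := fun a b =>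
    (continuous_const.max continuous_id).intervalIntegrable a b
  have below : ∫ y in r..x, max x y = x * (x - r) := by
    rw [intervalIntegral.integral_congr (g := fun _ => x) fun y hy =>
      max_eq_left (Set.uIcc_of_le hx.1 ▸ hy).2]
    simp [mul_comm]
  rw [← intervalIntegral.integral_add_adjacent_intervals (hint r x) (hint x s), below,
    integral_max_of_le le_rfl hx.2]
  ring

lemma integral_sq_sub_add_const (r s c : ℝ) :
    ∫ x in r..s, ((x - r) ^ 2 + c) / 2 = ((s - r) ^ 3 / 3 + c * (s - r)) / 2 := by
  have hsq : IntervalIntegrable (fun x : ℝ => (x - r) ^ 2) volume r s := by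
    apply Continuous.intervalIntegrable; fun_prop
  rw [intervalIntegral.integral_div, intervalIntegral.integral_add hsq intervalIntegrable_const,
    intervalIntegral.integral_comp_sub_right (fun x => x ^ 2), integral_pow,
    intervalIntegral.integral_const]
  simp only [sub_self, smul_eq_mul]
  ring

lemma integral_integral_max_unifIcc_self {r s : ℝ} (hrs : r < s) :
    ∫ x, ∫ y, max x y ∂(unifIcc r s) ∂(unifIcc r s) = r + 2 * (s - r) / 3 := by
  have hne : s - r ≠ 0 := sub_ne_zero.2 hrs.ne'
  rw [integral_unifIcc hrs.le, intervalIntegral.integral_congr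
    (g := fun x => (s - r)⁻¹ * (((x - r) ^ 2 + (s ^ 2 - r ^ 2)) / 2)) fun x hx => by
      rw [integral_unifIcc hrs.le, integral_max_of_mem_Icc (Set.uIcc_of_le hrs.le ▸ hx)],
    intervalIntegral.integral_const_mul, integral_sq_sub_add_const]
  field_simp
  ring

lemma integral_integral_max_unifIcc_of_le {r s t u : ℝ} (hrs : r < s) (hst : s ≤ t)
    (htu : t < u) :
    ∫ x, ∫ y, max x y ∂(unifIcc t u) ∂(unifIcc r s) = (t + u) / 2 := by
  have hne : u - t ≠ 0 := sub_ne_zero.2 htu.ne'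
  rw [integral_unifIcc hrs.le, intervalIntegral.integral_congr (g := fun _ => (t + u) / 2)
    fun x hx => by
      rw [integral_unifIcc htu.le,
        integral_max_of_le ((Set.uIcc_of_le hrs.le ▸ hx).2.trans hst) htu.le]
      field_simp
      ring,
    intervalIntegral.integral_const, smul_eq_mul]
  field_simp [sub_ne_zero.2 hrs.ne']

theorem stmt_8 (r s t u : ℝ) (hrs : r < s) (hst : s ≤ t) (htu : t < u) :
    mutualE (unifIcc r s) (unifIcc t u) = (s - r) / 6 + (u - t) / 6 + (t - s) / 2 := by
  rw [mutualE, integral_integral_max_unifIcc_of_le hrs hst htu,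
    integral_integral_max_unifIcc_self hrs, integral_integral_max_unifIcc_self htu]
  ring
end

section
/- Let a, b > 0 be real numbers and let c ∈ [0, min(a,b)]. Then −2c³ + 3(a+b)c² − 6abc + ab(a+b) ≥ min(a,b)·(a−b)². -/
/-!
As a function of `c`, the right-hand side `P(c)` has derivative `-6 (c - a) (c - b)`, which is
`≤ 0` for `c ≤ min a b`; so `P` decreases on that range and `P (min a b) = min a b * (a - b) ^ 2`.
Concretely, for `a ≤ b` the Taylor expansion of `P` at `c = a`, where `P'` vanishes, reads
`P(c) = a (a - b)² + (a - c)² (3b - a - 2c)`, and the last factor is `(b - a) + 2 (b - c) ≥ 0`.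
-/

theorem overlap_cubic_eq (a b c : ℝ) :
    -2 * c ^ 3 + 3 * (a + b) * c ^ 2 - 6 * a * b * c + a * b * (a + b) =
      a * (a - b) ^ 2 + (a - c) ^ 2 * (3 * b - a - 2 * c) := by
  ring

theorem mul_sq_sub_le_overlap_cubic {a b c : ℝ} (hab : a ≤ b) (hca : c ≤ a) :
    a * (a - b) ^ 2 ≤ -2 * c ^ 3 + 3 * (a + b) * c ^ 2 - 6 * a * b * c + a * b * (a + b) := by
  have hfactor : 0 ≤ 3 * b - a - 2 * c := by linarith
  rw [overlap_cubic_eq]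
  exact le_add_of_nonneg_right (mul_nonneg (sq_nonneg _) hfactor)

theorem stmt_13_general (a b c : ℝ)
    (hc : c ∈ Set.Icc 0 (min a b)) :
    min a b * (a - b) ^ 2 ≤ -2 * c ^ 3 + 3 * (a + b) * c ^ 2 - 6 * a * b * c + a * b * (a + b) := by
  rcases le_total a b with hab | hba
  · rw [min_eq_left hab] at hc ⊢
    exact mul_sq_sub_le_overlap_cubic hab hc.2
  · rw [min_eq_right hba] at hc ⊢
    convert mul_sq_sub_le_overlap_cubic hba hc.2 using 1 <;> ring

theorem stmt_13 (a b c : ℝ) (ha : 0 < a) (hb : 0 < b)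
    (hc : c ∈ Set.Icc 0 (min a b)) :
    min a b * (a - b) ^ 2 ≤ -2 * c ^ 3 + 3 * (a + b) * c ^ 2 - 6 * a * b * c + a * b * (a + b) :=
  stmt_13_general a b c hc
end

section
/- Let ℓ_a, ℓ_b > 0 and 0 ≤ ℓ_{ab} ≤ min(ℓ_a, ℓ_b), set m_a = (ℓ_a − ℓ_{ab})/2, m_b = (ℓ_b − ℓ_{ab})/2 and E₀ := (1/6)m_a²/ℓ_a + (1/6)m_b²/ℓ_b − (1/3)ℓ_{ab}(m_a/ℓ_a)(m_b/ℓ_b). Let λ ∈ [0, max(ℓ_a − ℓ_{ab}, ℓ_b − ℓ_{ab})] and ϱ > 0 satisfy max(ℓ_a, ℓ_b) ≤ ϱ·λ. Then E₀ ≥ λ/(48·ϱ²). -/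
/-!
Assume `ℓ_b ≤ ℓ_a`, so that `λ ≤ ℓ_a - ℓ_{ab}` and `ℓ_a ≤ ϱ λ`. Cleared of denominators,
`E₀ - (ℓ_a - ℓ_{ab})³ / (48 ℓ_a²)` is a sum of nonnegative monomials in `ℓ_a - ℓ_{ab}`,
`ℓ_b - ℓ_{ab}` and `ℓ_{ab}`, and `λ / ϱ² ≤ λ³ / ℓ_a² ≤ (ℓ_a - ℓ_{ab})³ / ℓ_a²`.
-/

noncomputable def mutualEnergy (la lb lab : ℝ) : ℝ :=
  (1/6) * ((la - lab) / 2) ^ 2 / la + (1/6) * ((lb - lab) / 2) ^ 2 / lb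
    - (1/3) * lab * (((la - lab) / 2) / la) * (((lb - lab) / 2) / lb)

lemma mutualEnergy_comm (la lb lab : ℝ) : mutualEnergy la lb lab = mutualEnergy lb la lab := by
  unfold mutualEnergy
  ring

lemma mutualEnergy_sub_cube_div_eq {x y t : ℝ} (hx : x ≠ 0) (hy : y ≠ 0) :
    mutualEnergy x y t - (x - t) ^ 3 / (48 * x ^ 2) =
      ((x - t) ^ 3 * (y - t) + 2 * (x - t) ^ 2 * (y - t) ^ 2
        + t * (x - t) * ((x - y) ^ 2 + 3 * (y - t) ^ 2) + 2 * t ^ 2 * (x - y) ^ 2)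
        / (48 * x ^ 2 * y) := by
  unfold mutualEnergy
  field_simp
  ring

lemma cube_div_le_mutualEnergy {x y t : ℝ} (hy : 0 < y) (hyx : y ≤ x) (ht : 0 ≤ t)
    (hty : t ≤ y) : (x - t) ^ 3 / (48 * x ^ 2) ≤ mutualEnergy x y t := by
  have hxt : 0 ≤ x - t := by linarith
  have hyt : 0 ≤ y - t := by linarith
  rw [← sub_nonneg, mutualEnergy_sub_cube_div_eq (by linarith) hy.ne']
  positivity

lemma div_sq_le_pow_three_div_sq {x lam rho : ℝ} (hx : 0 < x) (hlam : 0 ≤ lam)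
    (h : x ≤ rho * lam) : lam / rho ^ 2 ≤ lam ^ 3 / x ^ 2 := by
  have hrho : rho ≠ 0 := by
    rintro rfl
    linarith
  rw [div_le_div_iff₀ (by positivity) (by positivity)]
  have hsq : x ^ 2 ≤ (rho * lam) ^ 2 := pow_le_pow_left₀ hx.le h 2
  calc lam * x ^ 2 ≤ lam * (rho * lam) ^ 2 := mul_le_mul_of_nonneg_left hsq hlam
    _ = lam ^ 3 * rho ^ 2 := by ring

theorem stmt_17_general (la lb lab lam rho : ℝ) (hla : 0 < la) (hlb : 0 < lb)
    (hlab : 0 ≤ lab) (hlab' : lab ≤ min la lb)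
    (hlam : lam ∈ Set.Icc 0 (max (la - lab) (lb - lab)))
    (hmax : max la lb ≤ rho * lam) :
    lam / (48 * rho ^ 2) ≤
      (1/6) * ((la - lab) / 2) ^ 2 / la + (1/6) * ((lb - lab) / 2) ^ 2 / lb
        - (1/3) * lab * (((la - lab) / 2) / la) * (((lb - lab) / 2) / lb) := by
  change lam / (48 * rho ^ 2) ≤ mutualEnergy la lb lab
  wlog hba : lb ≤ la generalizing la lb
  · rw [mutualEnergy_comm]
    exact this lb la hlb hla (min_comm la lb ▸ hlab') (max_comm (la - lab) _ ▸ hlam)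
      (max_comm la lb ▸ hmax) (le_of_not_ge hba)
  obtain ⟨hlam0, hlam1⟩ := hlam
  rw [max_eq_left (by linarith)] at hlam1
  rw [max_eq_left hba] at hmax
  calc lam / (48 * rho ^ 2) = (lam / rho ^ 2) / 48 := by ring
    _ ≤ (lam ^ 3 / la ^ 2) / 48 :=
        div_le_div_of_nonneg_right (div_sq_le_pow_three_div_sq hla hlam0 hmax) (by norm_num)
    _ ≤ (la - lab) ^ 3 / (48 * la ^ 2) := by
        rw [div_div, mul_comm (la ^ 2) 48]
        gcongr
    _ ≤ mutualEnergy la lb lab :=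
        cube_div_le_mutualEnergy hlb hba hlab (hlab'.trans (min_le_right la lb))

theorem stmt_17 (la lb lab lam rho : ℝ) (hla : 0 < la) (hlb : 0 < lb)
    (hlab : 0 ≤ lab) (hlab' : lab ≤ min la lb)
    (hlam : lam ∈ Set.Icc 0 (max (la - lab) (lb - lab)))
    (hrho : 0 < rho) (hmax : max la lb ≤ rho * lam) :
    lam / (48 * rho ^ 2) ≤
      (1/6) * ((la - lab) / 2) ^ 2 / la + (1/6) * ((lb - lab) / 2) ^ 2 / lb
        - (1/3) * lab * (((la - lab) / 2) / la) * (((lb - lab) / 2) / lb) :=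
  stmt_17_general la lb lab lam rho hla hlb hlab hlab' hlam hmax
end

section
/- Let a₁ ≤ b₁ ≤ a₂ ≤ b₂ be real numbers with a₁ < a₂ and b₁ < b₂, let μ, ν be the uniform probability measures on [a₁,a₂] and [b₁,b₂], and let E(μ,ν) := ∫∫ max(x,y) dμ dν − ½∫∫ max dμ dμ − ½∫∫ max dν dν. Then E(μ,ν) ≥ (1/6)·(ℓ_a − ℓ_b)²/max(ℓ_a, ℓ_b), where ℓ_a = a₂ − a₁ and ℓ_b = b₂ − b₁. -/
/-!
Writing `max x y = x + (y - x)₊`, `maxPrimitive x y = x² y / 2 - (y - x)₊³ / 6` satisfies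
`∂ₓ ∂_y maxPrimitive = max`, so the double integral of the kernel over a rectangle is a second
difference of `maxPrimitive`. For overlapping intervals this gives
`E = (ℓ_a + ℓ_b - 3c + c³ / (ℓ_a ℓ_b)) / 6` with `c = a₂ - b₁ ∈ [0, min ℓ_a ℓ_b]`, and the bound
becomes `min ℓ_a ℓ_b * (ℓ_a - ℓ_b)² ≤ ℓ_a ℓ_b (ℓ_a + ℓ_b) - 3 ℓ_a ℓ_b c + c³`: the right side
decreases in `c` on `[0, min ℓ_a ℓ_b]` and equals the left side at `c = min ℓ_a ℓ_b`.
-/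

open MeasureTheory

theorem hasDerivAt_max_zero_pow {n : ℕ} (hn : n ≠ 0) (t : ℝ) :
    HasDerivAt (fun y : ℝ => max y 0 ^ (n + 1)) ((n + 1) * max t 0 ^ n) t := by
  have off_zero : ∀ y ≠ (0 : ℝ),
      HasDerivAt (fun y : ℝ => max y 0 ^ (n + 1)) ((n + 1) * max y 0 ^ n) y := by
    intro y hy
    rcases hy.lt_or_gt with hneg | hpos
    · have hzero : (fun y : ℝ => max y 0 ^ (n + 1)) =ᶠ[nhds y] fun _ => 0 := by
        filter_upwards [eventually_lt_nhds hneg] with z hz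
        simp [max_eq_right hz.le]
      simpa [max_eq_right hneg.le, hn] using
        (hasDerivAt_const y (0 : ℝ)).congr_of_eventuallyEq hzero
    · have hpow : (fun y : ℝ => max y 0 ^ (n + 1)) =ᶠ[nhds y] fun z => z ^ (n + 1) := by
        filter_upwards [eventually_gt_nhds hpos] with z hz
        rw [max_eq_left hz.le]
      simpa [max_eq_left hpos.le] using (hasDerivAt_pow (n + 1) y).congr_of_eventuallyEq hpow
  rcases eq_or_ne t 0 with rfl | ht
  · exact hasDerivAt_of_hasDerivAt_of_ne off_zero (by fun_prop) (by fun_prop)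
  · exact off_zero t ht

noncomputable def maxPrimitive (x y : ℝ) : ℝ := x ^ 2 * y / 2 - max (y - x) 0 ^ 3 / 6

theorem maxPrimitive_of_le {x y : ℝ} (h : x ≤ y) :
    maxPrimitive x y = x ^ 2 * y / 2 - (y - x) ^ 3 / 6 := by
  rw [maxPrimitive, max_eq_left (sub_nonneg.2 h)]

theorem maxPrimitive_of_ge {x y : ℝ} (h : y ≤ x) : maxPrimitive x y = x ^ 2 * y / 2 := by
  rw [maxPrimitive, max_eq_right (sub_nonpos.2 h)]
  ring

theorem hasDerivAt_maxPrimitive_left (x y : ℝ) :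
    HasDerivAt (fun x => maxPrimitive x y) (x * y + max (y - x) 0 ^ 2 / 2) x := by
  have hcube := (hasDerivAt_max_zero_pow two_ne_zero (y - x)).comp x
    ((hasDerivAt_const x y).sub (hasDerivAt_id x))
  refine ((((hasDerivAt_pow 2 x).mul_const y).div_const 2).sub (hcube.div_const 6)).congr_deriv ?_
  push_cast
  ring

theorem integral_max_left (x r s : ℝ) :
    ∫ y in r..s, max x y = (x * s + max (s - x) 0 ^ 2 / 2) - (x * r + max (r - x) 0 ^ 2 / 2) := by
  have hderiv : ∀ y, HasDerivAt (fun y => x * y + max (y - x) 0 ^ 2 / 2) (max x y) y := by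
    intro y
    have hsq := (hasDerivAt_max_zero_pow one_ne_zero (y - x)).comp y ((hasDerivAt_id y).sub_const x)
    refine (((hasDerivAt_id y).const_mul x).add (hsq.div_const 2)).congr_deriv ?_
    norm_num [← max_add_add_left, max_comm]
  exact intervalIntegral.integral_eq_sub_of_hasDerivAt (fun y _ => hderiv y)
    ((continuous_const.max continuous_id).intervalIntegrable r s)

theorem integral_integral_max (p q r s : ℝ) :
    ∫ x in p..q, ∫ y in r..s, max x y
      = maxPrimitive q s - maxPrimitive q r - maxPrimitive p s + maxPrimitive p r := by
  simp_rw [integral_max_left]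
  rw [intervalIntegral.integral_eq_sub_of_hasDerivAt
    (fun x _ => (hasDerivAt_maxPrimitive_left x s).sub (hasDerivAt_maxPrimitive_left x r))
    (by apply Continuous.intervalIntegrable; fun_prop)]
  simp only [Pi.sub_apply]
  ring

theorem integral_unifIcc_s18 {r s : ℝ} (hrs : r < s) (f : ℝ → ℝ) :
    ∫ y, f y ∂(unifIcc r s) = (∫ y in r..s, f y) / (s - r) := by
  rw [unifIcc, integral_smul_measure, ENNReal.toReal_inv, ENNReal.toReal_ofReal (sub_pos.2 hrs).le,
    intervalIntegral.integral_of_le hrs.le, integral_Icc_eq_integral_Ioc, smul_eq_mul,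
    inv_mul_eq_div]

theorem integral_integral_max_unifIcc {p q r s : ℝ} (hpq : p < q) (hrs : r < s) :
    ∫ x, ∫ y, max x y ∂(unifIcc r s) ∂(unifIcc p q)
      = (maxPrimitive q s - maxPrimitive q r - maxPrimitive p s + maxPrimitive p r)
          / ((q - p) * (s - r)) := by
  simp_rw [integral_unifIcc_s18 hrs, integral_unifIcc_s18 hpq, intervalIntegral.integral_div,
    integral_integral_max, div_div, mul_comm]

theorem mutualE_unifIcc_of_overlap {a₁ b₁ a₂ b₂ : ℝ} (h₁ : a₁ ≤ b₁) (h₂ : b₁ ≤ a₂) (h₃ : a₂ ≤ b₂)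
    (ha : a₁ < a₂) (hb : b₁ < b₂) :
    mutualE (unifIcc a₁ a₂) (unifIcc b₁ b₂)
      = ((a₂ - a₁) + (b₂ - b₁) - 3 * (a₂ - b₁)
          + (a₂ - b₁) ^ 3 / ((a₂ - a₁) * (b₂ - b₁))) / 6 := by
  rw [mutualE, integral_integral_max_unifIcc ha hb, integral_integral_max_unifIcc ha ha,
    integral_integral_max_unifIcc hb hb, maxPrimitive_of_le h₃, maxPrimitive_of_ge h₂,
    maxPrimitive_of_le (by linarith), maxPrimitive_of_le h₁, maxPrimitive_of_le ha.le,
    maxPrimitive_of_ge ha.le, maxPrimitive_of_le hb.le, maxPrimitive_of_ge hb.le,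
    maxPrimitive_of_le le_rfl, maxPrimitive_of_le le_rfl, maxPrimitive_of_le le_rfl,
    maxPrimitive_of_le le_rfl]
  have : a₂ - a₁ ≠ 0 := sub_ne_zero.2 ha.ne'
  have : b₂ - b₁ ≠ 0 := sub_ne_zero.2 hb.ne'
  field_simp
  ring

theorem sub_sq_div_max_le {a b c : ℝ} (ha : 0 < a) (hb : 0 < b) (hc : 0 ≤ c) (hca : c ≤ a)
    (hcb : c ≤ b) : (a - b) ^ 2 / max a b ≤ a + b - 3 * c + c ^ 3 / (a * b) := by
  wlog hab : a ≤ b generalizing a b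
  · simpa only [max_comm, mul_comm, add_comm, sub_sq_comm] using
      this hb ha hcb hca (le_of_not_ge hab)
  -- the right side minus the left side is `(a - c) * (3ab - c² - ca - a²)`
  have key : a * (a - b) ^ 2 ≤ a * b * (a + b) - 3 * a * b * c + c ^ 3 := by
    nlinarith [mul_nonneg (sub_nonneg.2 hca) (by nlinarith : 0 ≤ 3 * a * b - c ^ 2 - c * a - a ^ 2)]
  rw [max_eq_right hab]
  calc (a - b) ^ 2 / b = a * (a - b) ^ 2 / (a * b) := by field_simp
    _ ≤ (a * b * (a + b) - 3 * a * b * c + c ^ 3) / (a * b) := by gcongr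
    _ = a + b - 3 * c + c ^ 3 / (a * b) := by field_simp

theorem stmt_18 (a₁ b₁ a₂ b₂ : ℝ) (h₁ : a₁ ≤ b₁) (h₂ : b₁ ≤ a₂) (h₃ : a₂ ≤ b₂)
    (ha : a₁ < a₂) (hb : b₁ < b₂) :
    (1/6) * ((a₂ - a₁) - (b₂ - b₁)) ^ 2 / max (a₂ - a₁) (b₂ - b₁)
      ≤ mutualE (unifIcc a₁ a₂) (unifIcc b₁ b₂) := by
  rw [mutualE_unifIcc_of_overlap h₁ h₂ h₃ ha hb, mul_div_assoc, one_div_mul_eq_div]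
  gcongr
  exact sub_sq_div_max_le (by linarith) (by linarith) (by linarith) (by linarith) (by linarith)
end
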